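/- arXiv:2603.20905 — 2 statements merged into one kernel-verified Lean document; each statement's English description precedes it below -/
import Mathlib

section
/- For any countable set Y ⊆ ω₂, the set of conditions q ∈ 𝔹(π⃗, f) such that Y ⊆ dom(h_q) is dense and open in 𝔹(π⃗, f): it is downward closed, and every condition p ∈ 𝔹(π⃗, f) has an extension q ≤ p with Y ⊆ dom(h_q). -/
/-
Openness is immediate, since a stronger condition has a larger domain. For density, enumerate
`Y = {e 0, e 1, …}` and send each new point `e n` to a value `v n` chosen by recursion on `n`:
above `e n`, below every `β ∈ I_p` above `e n`, off the range of `h_p` and the earlier values, and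
such that for each such `β`, `π_β (v n)` exceeds `π_β x` and `f (π_β x)` for `x = e n`, every old
value and every earlier new value below `β`. For a single `β` this excludes only countably many
candidates, as `π_β` is a bijection onto `ω₁` and `ω₁` is regular; and the candidates are taken
below the least relevant `β`, whose cofinality is `ω₁`. Requirement (ii) for two new points then
holds because the later value dominates the earlier one.
-/

noncomputable section

abbrev Ordi : Type 1 := Ordinal.{0}

/-- The ordinal `ω₁`. -/
def w1 : Ordi := (Cardinal.aleph 1).ord

/-- The ordinal `ω₂`. -/
def w2 : Ordi := (Cardinal.aleph 2).ord

/-- `S²₁`: the set of ordinals below `ω₂` of cofinality `ω₁`. -/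
def S21 : Set Ordi := {α | α < w2 ∧ Ordinal.cof α = Cardinal.aleph 1}

/-- A condition in the poset `𝔹(π⃗, f)`: a pair `(h, I)` where `h` is an
injective partial function on `ω₂` (represented by a total function `h`
together with its domain `dom`) with countable domain, fixing no point of its
domain, and `I` is a countable subset of `S²₁` each of whose members is closed
under `h` and `h⁻¹`.  (Membership in the poset does not depend on `π⃗` or `f`.) -/
structure BCond where
  dom : Set Ordi
  h : Ordi → Ordi
  I : Set Ordi
  dom_countable : dom.Countable
  dom_subset : dom ⊆ Set.Iio w2
  mapsTo : ∀ α ∈ dom, h α < w2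
  injOn : Set.InjOn h dom
  ne_self : ∀ α ∈ dom, h α ≠ α
  I_countable : I.Countable
  I_subset : I ⊆ S21
  closed : ∀ β ∈ I, ∀ α ∈ dom, (α < β → h α < β) ∧ (h α < β → α < β)

/-- The order on `𝔹(π⃗, f)`: `q ≤ p` iff `h_p ⊆ h_q`, `I_p ⊆ I_q`, and the
oscillation requirements (c)(i) and (c)(ii) hold for every new point of the
domain below a member of `I_p`. -/
def BLe (pi : Ordi → Ordi → Ordi) (f : Ordi → Ordi) (q p : BCond) : Prop :=
  (p.dom ⊆ q.dom ∧ ∀ α ∈ p.dom, q.h α = p.h α) ∧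
  p.I ⊆ q.I ∧
  ∀ α ∈ q.dom, α ∉ p.dom → ∀ β ∈ p.I, α < β →
    (f (min (pi β α) (pi β (q.h α))) < max (pi β α) (pi β (q.h α))) ∧
    (∀ γ ∈ q.dom, γ < β → γ ≠ α →
      f (min (pi β (q.h γ)) (pi β (q.h α))) < max (pi β (q.h γ)) (pi β (q.h α)))

open Set Cardinal Ordinal Function

lemma aleph0_lt_cof_w1 : ℵ₀ < w1.cof := by
  rw [w1, isRegular_aleph_one.cof_ord]
  exact aleph0_lt_aleph_one

lemma aleph0_lt_cof_w2 : ℵ₀ < w2.cof := by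
  rw [w2, ord_aleph, show (2 : Ordinal) = 1 + 1 from one_add_one_eq_two.symm, cof_omega_add_one]
  exact aleph0_lt_aleph_one.trans (aleph_lt_aleph.2 (by norm_num))

lemma w1_le_of_mem_S21 {β : Ordi} (hβ : β ∈ S21) : w1 ≤ β := by
  have h := ord_cof_le β
  rwa [hβ.2] at h

lemma aleph0_lt_cof_of_mem_S21 {β : Ordi} (hβ : β ∈ S21) : ℵ₀ < β.cof :=
  hβ.2 ▸ aleph0_lt_aleph_one

lemma countable_Iio_of_lt_w1 {δ : Ordi} (hδ : δ < w1) : (Iio δ).Countable := by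
  rw [← le_aleph0_iff_set_countable, Cardinal.mk_Iio_ordinal, lift_le_aleph0, ← lt_aleph_one_iff]
  exact Cardinal.lt_ord.1 hδ

lemma exists_forall_lt_of_countable {o : Ordinal.{u}} (ho : ℵ₀ < o.cof) {S : Set Ordinal.{u}}
    (hS : S.Countable) (hSo : ∀ x ∈ S, x < o) : ∃ δ < o, ∀ x ∈ S, x < δ := by
  refine ⟨sSup ((· + 1) '' S), sSup_add_one_lt_of_lt_cof ?_ hSo, fun x hx => ?_⟩
  · rw [← lift_cof]
    exact (le_aleph0_iff_set_countable.2 hS).trans_lt (aleph0_lt_lift.2 ho)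
  · have hbdd : BddAbove ((· + 1) '' S) := ⟨o, by
      rintro _ ⟨y, hy, rfl⟩
      exact Order.add_one_le_of_lt (hSo y hy)⟩
    exact (lt_add_one x).trans_le (le_csSup hbdd (mem_image_of_mem _ hx))

lemma exists_mem_Ioo_notMem_of_countable {o α : Ordinal.{u}} (ho : ℵ₀ < o.cof) (hα : α < o)
    {S : Set Ordinal.{u}} (hS : S.Countable) : ∃ v ∈ Ioo α o, v ∉ S := by
  obtain ⟨δ, hδo, hδ⟩ := exists_forall_lt_of_countable ho
    ((hS.mono inter_subset_left).insert α) (S := insert α (S ∩ Iio o))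
    (by rintro x (rfl | hx); exacts [hα, hx.2])
  exact ⟨δ, ⟨hδ α (mem_insert _ _), hδo⟩,
    fun hδS => (hδ δ (mem_insert_of_mem _ ⟨hδS, hδo⟩)).false⟩

lemma apply_min_lt_max_of_lt {α : Type*} [LinearOrder α] {g : α → α} {a b : α} (hab : a < b)
    (hga : g a < b) : g (min a b) < max a b := by
  rwa [min_eq_left hab.le, max_eq_right hab.le]

lemma exists_seq_forall_image_Iio {ι α : Type*} [Preorder ι] [WellFoundedLT ι] [Countable ι]
    {P : ι → Set α → α → Prop} (h : ∀ i (s : Set α), s.Countable → ∃ a, P i s a) :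
    ∃ v : ι → α, ∀ i, P i (v '' Iio i) (v i) := by
  rcases isEmpty_or_nonempty ι with hι | ⟨⟨i₀⟩⟩
  · exact ⟨isEmptyElim, isEmptyElim⟩
  have : Nonempty α := (h i₀ ∅ countable_empty).nonempty
  choose! g hg using h
  let v : ι → α := WellFoundedLT.fix fun i w => g i {a | ∃ j, ∃ hj : j < i, w j hj = a}
  have hv : ∀ i, v i = g i (v '' Iio i) := fun i => by
    change WellFoundedLT.fix _ i = _
    rw [WellFoundedLT.fix_eq]
    congr 1
    ext a
    exact ⟨fun ⟨j, hj, h⟩ => ⟨j, hj, h⟩, fun ⟨j, hj, h⟩ => ⟨j, hj, h⟩⟩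
  exact ⟨v, fun i => by rw [hv i]; exact hg i _ ((to_countable _).image v)⟩

lemma injective_of_forall_notMem_image_Iio {ι α : Type*} [LinearOrder ι] {v : ι → α}
    (hv : ∀ i, v i ∉ v '' Iio i) : Injective v := by
  intro i j hij
  by_contra hne
  rcases lt_or_gt_of_ne hne with h | h
  exacts [hv j ⟨i, h, hij⟩, hv i ⟨j, h, hij.symm⟩]

lemma injOn_invFun_range {α β : Type*} [Nonempty α] (e : α → β) : InjOn (invFun e) (range e) :=
  fun a ha b hb h => by rw [← invFun_eq ha, h, invFun_eq hb]

section Oscillation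

variable {pi : Ordi → Ordi → Ordi} {f : Ordi → Ordi}

def Dominates (pi : Ordi → Ordi → Ordi) (f : Ordi → Ordi) (β : Ordi) (C : Set Ordi)
    (z : Ordi) : Prop :=
  ∀ x ∈ C, x < β → pi β x < pi β z ∧ f (pi β x) < pi β z

lemma Dominates.apply_min_lt_max {β z x : Ordi} {C : Set Ordi} (hz : Dominates pi f β C z)
    (hx : x ∈ C) (hxβ : x < β) : f (min (pi β x) (pi β z)) < max (pi β x) (pi β z) :=
  apply_min_lt_max_of_lt (hz x hx hxβ).1 (hz x hx hxβ).2

lemma countable_setOf_not_dominates {β : Ordi} (hβ : BijOn (pi β) (Iio β) (Iio w1))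
    (hf_maps : ∀ i < w1, f i < w1) {C : Set Ordi} (hC : C.Countable) :
    {z | z < β ∧ ¬ Dominates pi f β C z}.Countable := by
  obtain ⟨δ, hδ, hδC⟩ := exists_forall_lt_of_countable aleph0_lt_cof_w1
    (S := (fun x => max (pi β x) (f (pi β x))) '' (C ∩ Iio β))
    ((hC.mono inter_subset_left).image _) (by
      rintro _ ⟨x, hx, rfl⟩
      have hx' := hβ.mapsTo hx.2
      exact max_lt hx' (hf_maps _ hx'))
  refine MapsTo.countable_of_injOn (t := Iio δ) (fun z hz => ?_)
    (hβ.injOn.mono fun z hz => hz.1) (countable_Iio_of_lt_w1 hδ)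
  by_contra hzδ
  refine hz.2 fun x hx hxβ => ?_
  have hmax := (hδC _ ⟨x, ⟨hx, hxβ⟩, rfl⟩).trans_le (not_lt.1 hzδ)
  exact ⟨(le_max_left _ _).trans_lt hmax, (le_max_right _ _).trans_lt hmax⟩

/-- The requirements on the value `v` of a new point `α`, given the countable set `B` of values
it has to avoid and dominate. -/
structure IsFreshValue (pi : Ordi → Ordi → Ordi) (f : Ordi → Ordi) (I : Set Ordi) (α : Ordi)
    (B : Set Ordi) (v : Ordi) : Prop where
  lt : α < v
  lt_w2 : v < w2
  notMem : v ∉ B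
  lt_of_lt : ∀ β ∈ I, α < β → v < β
  dominates : ∀ β ∈ I, α < β → Dominates pi f β (insert α B) v

lemma exists_isFreshValue (hpi : ∀ β, w1 ≤ β → β < w2 → BijOn (pi β) (Iio β) (Iio w1))
    (hf_maps : ∀ i < w1, f i < w1) {I : Set Ordi} (hI : I.Countable) (hIS : I ⊆ S21)
    {α : Ordi} (hα : α < w2) {B : Set Ordi} (hB : B.Countable) :
    ∃ v, IsFreshValue pi f I α B v := by
  set T := {β ∈ I | α < β}
  set o := sInf (insert w2 T)
  have ho : o ∈ insert w2 T := csInf_mem (insert_nonempty _ _)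
  have ho_le : ∀ β ∈ T, o ≤ β := fun β hβ => csInf_le' (mem_insert_of_mem _ hβ)
  have hαo : α < o := by
    rcases ho with h | h
    exacts [h ▸ hα, h.2]
  have hcof : ℵ₀ < o.cof := by
    rcases ho with h | h
    exacts [h ▸ aleph0_lt_cof_w2, aleph0_lt_cof_of_mem_S21 (hIS h.1)]
  have hbad : (B ∪ ⋃ β ∈ T, {z | z < β ∧ ¬ Dominates pi f β (insert α B) z}).Countable :=
    hB.union <| (hI.mono (sep_subset _ _)).biUnion fun β hβ =>
      countable_setOf_not_dominates (hpi β (w1_le_of_mem_S21 (hIS hβ.1)) (hIS hβ.1).1)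
        hf_maps (hB.insert α)
  obtain ⟨v, ⟨hαv, hvo⟩, hv⟩ := exists_mem_Ioo_notMem_of_countable hcof hαo hbad
  have hvβ : ∀ β ∈ I, α < β → v < β := fun β hβ hαβ => hvo.trans_le (ho_le β ⟨hβ, hαβ⟩)
  refine ⟨v, hαv, hvo.trans_le (csInf_le' (mem_insert _ _)), fun h => hv (Or.inl h), hvβ,
    fun β hβ hαβ => ?_⟩
  by_contra hdom
  exact hv (Or.inr (mem_biUnion ⟨hβ, hαβ⟩ ⟨hvβ β hβ hαβ, hdom⟩))

end Oscillation

lemma BLe_refl (pi : Ordi → Ordi → Ordi) (f : Ordi → Ordi) (p : BCond) : BLe pi f p p :=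
  ⟨⟨subset_rfl, fun _ _ => rfl⟩, subset_rfl, fun _ hα hαp => absurd hα hαp⟩

namespace BCond

variable {pi : Ordi → Ordi → Ordi} {f : Ordi → Ordi} {p : BCond} {e v : ℕ → Ordi}

def extendH (p : BCond) (e v : ℕ → Ordi) (α : Ordi) : Ordi :=
  open Classical in if α ∈ p.dom then p.h α else v (invFun e α)

lemma extendH_of_mem {α : Ordi} (hα : α ∈ p.dom) : extendH p e v α = p.h α :=
  open Classical in if_pos hα

lemma extendH_of_notMem {α : Ordi} (hα : α ∉ p.dom) : extendH p e v α = v (invFun e α) :=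
  open Classical in if_neg hα

variable (hv : ∀ n, IsFreshValue pi f p.I (e n) (p.h '' p.dom ∪ v '' Iio n) (v n))
include hv

lemma isFreshValue_extendH {α : Ordi} (hα : α ∈ p.dom ∪ range e) (hαp : α ∉ p.dom) :
    IsFreshValue pi f p.I α (p.h '' p.dom ∪ v '' Iio (invFun e α)) (extendH p e v α) := by
  have h := hv (invFun e α)
  rwa [invFun_eq (hα.resolve_left hαp), ← extendH_of_notMem (e := e) (v := v) hαp] at h

lemma extendH_notMem_image {α : Ordi} (hα : α ∈ p.dom ∪ range e) (hαp : α ∉ p.dom) :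
    extendH p e v α ∉ p.h '' p.dom :=
  fun h => (isFreshValue_extendH hv hα hαp).notMem (Or.inl h)

lemma injOn_extendH : InjOn (extendH p e v) (p.dom ∪ range e) := by
  have hvinj : Injective v :=
    injective_of_forall_notMem_image_Iio fun n h => (hv n).notMem (Or.inr h)
  intro α hα γ hγ hαγ
  by_cases hαp : α ∈ p.dom <;> by_cases hγp : γ ∈ p.dom
  · rw [extendH_of_mem hαp, extendH_of_mem hγp] at hαγ
    exact p.injOn hαp hγp hαγ
  · exact absurd ⟨α, hαp, (extendH_of_mem hαp).symm.trans hαγ⟩ (extendH_notMem_image hv hγ hγp)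
  · exact absurd ⟨γ, hγp, (extendH_of_mem hγp).symm.trans hαγ.symm⟩
      (extendH_notMem_image hv hα hαp)
  · rw [extendH_of_notMem hαp, extendH_of_notMem hγp] at hαγ
    exact injOn_invFun_range e (hα.resolve_left hαp) (hγ.resolve_left hγp) (hvinj hαγ)

def extend : BCond where
  dom := p.dom ∪ range e
  h := extendH p e v
  I := p.I
  dom_countable := p.dom_countable.union (countable_range e)
  dom_subset := union_subset p.dom_subset
    (range_subset_iff.2 fun n => (hv n).lt.trans (hv n).lt_w2)
  mapsTo α hα := by
    by_cases hαp : α ∈ p.dom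
    · rw [extendH_of_mem hαp]
      exact p.mapsTo α hαp
    · exact (isFreshValue_extendH hv hα hαp).lt_w2
  injOn := injOn_extendH hv
  ne_self α hα := by
    by_cases hαp : α ∈ p.dom
    · rw [extendH_of_mem hαp]
      exact p.ne_self α hαp
    · exact (isFreshValue_extendH hv hα hαp).lt.ne'
  I_countable := p.I_countable
  I_subset := p.I_subset
  closed β hβ α hα := by
    by_cases hαp : α ∈ p.dom
    · rw [extendH_of_mem hαp]
      exact p.closed β hβ α hαp
    · have hfresh := isFreshValue_extendH hv hα hαp
      exact ⟨hfresh.lt_of_lt β hβ, hfresh.lt.trans⟩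

lemma extendH_apply_min_lt_max {α β γ : Ordi} (hα : α ∈ p.dom ∪ range e) (hαp : α ∉ p.dom)
    (hβ : β ∈ p.I) (hαβ : α < β) (hγ : γ ∈ p.dom ∪ range e) (hγβ : γ < β) (hγα : γ ≠ α) :
    f (min (pi β (extendH p e v γ)) (pi β (extendH p e v α))) <
      max (pi β (extendH p e v γ)) (pi β (extendH p e v α)) := by
  have hfα := isFreshValue_extendH hv hα hαp
  by_cases hγp : γ ∈ p.dom
  · refine (hfα.dominates β hβ hαβ).apply_min_lt_max
      (Or.inr (Or.inl ⟨γ, hγp, (extendH_of_mem hγp).symm⟩)) ?_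
    rw [extendH_of_mem hγp]
    exact (p.closed β hβ γ hγp).1 hγβ
  have hfγ := isFreshValue_extendH hv hγ hγp
  have hidx : invFun e γ ≠ invFun e α := fun h =>
    hγα (injOn_invFun_range e (hγ.resolve_left hγp) (hα.resolve_left hαp) h)
  rcases lt_or_gt_of_ne hidx with hlt | hlt
  · exact (hfα.dominates β hβ hαβ).apply_min_lt_max
      (Or.inr (Or.inr ⟨_, hlt, (extendH_of_notMem hγp).symm⟩)) (hfγ.lt_of_lt β hβ hγβ)
  · rw [min_comm, max_comm]
    exact (hfγ.dominates β hβ hγβ).apply_min_lt_max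
      (Or.inr (Or.inr ⟨_, hlt, (extendH_of_notMem hαp).symm⟩)) (hfα.lt_of_lt β hβ hαβ)

lemma extend_le : BLe pi f (extend hv) p :=
  ⟨⟨subset_union_left, fun _ hα => extendH_of_mem hα⟩, subset_rfl, fun _ hα hαp β hβ hαβ =>
    ⟨((isFreshValue_extendH hv hα hαp).dominates β hβ hαβ).apply_min_lt_max (mem_insert _ _) hαβ,
      fun _ hγ hγβ hγα => extendH_apply_min_lt_max hv hα hαp hβ hαβ hγ hγβ hγα⟩⟩

end BCond

theorem BCond_dense_open_dom_general (pi : Ordi → Ordi → Ordi) (f : Ordi → Ordi)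
    (hpi : ∀ β, w1 ≤ β → β < w2 → Set.BijOn (pi β) (Set.Iio β) (Set.Iio w1))
    (hf_maps : ∀ i < w1, f i < w1)
    (Y : Set Ordi) (hY_ctble : Y.Countable) (hY_sub : Y ⊆ Set.Iio w2) :
    (∀ p q : BCond, Y ⊆ p.dom → BLe pi f q p → Y ⊆ q.dom) ∧
    (∀ p : BCond, ∃ q : BCond, BLe pi f q p ∧ Y ⊆ q.dom) := by
  refine ⟨fun p q hYp hqp => hYp.trans hqp.1.1, fun p => ?_⟩
  rcases Y.eq_empty_or_nonempty with rfl | hY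
  · exact ⟨p, BLe_refl pi f p, empty_subset _⟩
  obtain ⟨e, rfl⟩ := hY_ctble.exists_eq_range hY
  obtain ⟨v, hv⟩ := exists_seq_forall_image_Iio
    (P := fun n s a => IsFreshValue pi f p.I (e n) (p.h '' p.dom ∪ s) a) fun n s hs =>
      exists_isFreshValue hpi hf_maps p.I_countable p.I_subset (hY_sub (mem_range_self n))
        ((p.dom_countable.image p.h).union hs)
  exact ⟨BCond.extend hv, BCond.extend_le hv, subset_union_right⟩

/-- For any countable `Y ⊆ ω₂`, the set of conditions `q` with `Y ⊆ dom(h_q)`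
is dense and open in `𝔹(π⃗, f)`: it is downward closed, and every condition
has an extension whose domain contains `Y`. -/
theorem BCond_dense_open_dom (pi : Ordi → Ordi → Ordi) (f : Ordi → Ordi)
    (hpi : ∀ β, w1 ≤ β → β < w2 → Set.BijOn (pi β) (Set.Iio β) (Set.Iio w1))
    (hf_maps : ∀ i < w1, f i < w1) (hf_inj : Set.InjOn f (Set.Iio w1))
    (Y : Set Ordi) (hY_ctble : Y.Countable) (hY_sub : Y ⊆ Set.Iio w2) :
    (∀ p q : BCond, Y ⊆ p.dom → BLe pi f q p → Y ⊆ q.dom) ∧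
    (∀ p : BCond, ∃ q : BCond, BLe pi f q p ∧ Y ⊆ q.dom) :=
  BCond_dense_open_dom_general pi f hpi hf_maps Y hY_ctble hY_sub

end
end

section
/- Assume the continuum hypothesis (2^ω = ω₁). Then the poset ℂ is ω₂-c.c.: every antichain in ℂ (i.e., every set of pairwise incompatible conditions, where p and q are incompatible iff no condition extends both) has cardinality at most ω₁. -/
noncomputable section

/-- A condition in the poset `ℂ`: a partial function (represented by a total
function `val` together with its domain `dom`) whose domain is a countable
subset of `⋃ { {β} × β : ω₁ ≤ β < ω₂ }` and which, on each section
`{β} × β`, is an injective function into `ω₁`. -/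
structure CCond where
  dom : Set (Ordi × Ordi)
  val : Ordi × Ordi → Ordi
  dom_countable : dom.Countable
  dom_subset : ∀ x ∈ dom, w1 ≤ x.1 ∧ x.1 < w2 ∧ x.2 < x.1
  mapsTo : ∀ x ∈ dom, val x < w1
  injOn : ∀ β γ γ' : Ordi, (β, γ) ∈ dom → (β, γ') ∈ dom →
    val (β, γ) = val (β, γ') → γ = γ'

/-- The order on `ℂ`: `q ≤ p` iff `p ⊆ q` as partial functions. -/
def CLe (q p : CCond) : Prop :=
  p.dom ⊆ q.dom ∧ ∀ x ∈ p.dom, q.val x = p.val x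

/-- Two conditions in `ℂ` are compatible iff some condition extends both. -/
def CCompatible (p q : CCond) : Prop :=
  ∃ r : CCond, CLe r p ∧ CLe r q

/-!
Given `ω₂` conditions `p ξ`, let `x ξ` be the set of sections `{β} × β` that `p ξ` meets. A weak
form of Fodor's lemma yields `δ < ω₂` such that `x ξ ∩ ξ ⊆ δ` for `ω₂` many `ξ`. Under CH there
are only `ℵ₁` possible restrictions of a condition to the sections below `δ` (countable subsets of
`δ × δ × ω₁`), so `ω₂` of these `ξ` share that restriction. For two of them, `ξ < η` with
`x ξ ⊆ η`, every section met by both lies below `δ`, where they coincide; hence their union is a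
condition.
-/

open Cardinal Set
open scoped Ordinal

universe u

lemma w1_eq_omega_one : w1 = ω₁ := ord_aleph 1

lemma w2_eq_omega_two : w2 = ω_ 2 := ord_aleph 2

lemma w1_lt_w2 : w1 < w2 := by
  rw [w1_eq_omega_one, w2_eq_omega_two, Ordinal.omega_lt_omega]; exact one_lt_two

lemma w1_pos : 0 < w1 := w1_eq_omega_one ▸ Ordinal.omega_pos 1

lemma add_one_lt_w1 {o : Ordi} (ho : o < w1) : o + 1 < w1 :=
  (w1_eq_omega_one ▸ isSuccLimit_omega 1).add_one_lt ho

lemma w2_pos : 0 < w2 := w2_eq_omega_two ▸ Ordinal.omega_pos 2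

lemma add_one_lt_w2 {o : Ordi} (ho : o < w2) : o + 1 < w2 :=
  (w2_eq_omega_two ▸ isSuccLimit_omega 2).add_one_lt ho

lemma isRegular_aleph_two : (ℵ_ 2 : Cardinal.{u}).IsRegular :=
  one_add_one_eq_two (R := Ordinal) ▸ isRegular_aleph_add_one 1

lemma cof_lift_w2 : (Ordinal.lift.{1} w2).cof = ℵ_ 2 := by
  rw [← Ordinal.lift_cof, w2, isRegular_aleph_two.cof_ord, lift_aleph]
  simp

lemma mk_Iio_le_aleph_one {o : Ordi} (ho : o < w2) : #(Iio o) ≤ ℵ₁ := by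
  rw [w2, lt_ord, ← one_add_one_eq_two, ← succ_aleph, Order.lt_succ_iff] at ho
  simpa [mk_Iio_ordinal] using lift_le.{1}.2 ho

lemma mk_Iio_lt_aleph_two {o : Ordi} (ho : o < w2) : #(Iio o) < ℵ_ 2 :=
  (mk_Iio_le_aleph_one ho).trans_lt (aleph_lt_aleph.2 one_lt_two)

lemma mk_Iio_w2 : #(Iio w2) = ℵ_ 2 := by
  simp [mk_Iio_ordinal, w2]

lemma iSup_lt_w2 {ι : Type 1} {f : ι → Ordi} (hι : #ι < ℵ_ 2) (hf : ∀ i, f i < w2) :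
    ⨆ i, f i < w2 :=
  Ordinal.lift_iSup_lt_of_lt_cof (by simpa [cof_lift_w2]) hf

lemma sSup_lt_w2 {s : Set Ordi} (hs : #s < ℵ_ 2) (h : ∀ o ∈ s, o < w2) : sSup s < w2 :=
  Ordinal.sSup_lt_of_lt_cof (by rwa [cof_lift_w2]) h

lemma exists_forall_lt_of_aleph_two_le_mk {S s : Set Ordi} (hS : ℵ_ 2 ≤ #S) (hs : #s < ℵ_ 2)
    (hsw : s ⊆ Iio w2) : ∃ η ∈ S, ∀ β ∈ s, β < η := by
  have hb : sSup s < w2 := sSup_lt_w2 hs hsw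
  obtain ⟨η, hηS, hη⟩ : ∃ η ∈ S, sSup s < η := by
    by_contra! h
    have hS_small : S ⊆ Iio (sSup s + 1) := fun η hη => Order.lt_add_one_iff.2 (h η hη)
    exact ((mk_le_mk_of_subset hS_small).trans_lt
      (mk_Iio_lt_aleph_two (add_one_lt_w2 hb))).not_ge hS
  exact ⟨η, hηS, fun β hβ => (le_csSup ⟨w2, fun o ho => (hsw ho).le⟩ hβ).trans_lt hη⟩

lemma mk_countable_subsets_le_aleph_one {α : Type u} (hCH : (2 : Cardinal.{u}) ^ ℵ₀ = ℵ₁)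
    {s : Set α} (hs : #s ≤ ℵ₁) : #{t : Set α // t ⊆ s ∧ t.Countable} ≤ ℵ₁ := by
  simp_rw [← le_aleph0_iff_set_countable]
  calc #{t : Set α // t ⊆ s ∧ #t ≤ ℵ₀} ≤ max #s ℵ₀ ^ ℵ₀ := mk_bounded_subset_le s ℵ₀
    _ ≤ ℵ₁ ^ ℵ₀ := power_le_power_right (max_le hs (aleph0_le_aleph 1))
    _ = ℵ₁ := by rw [← hCH, ← power_mul, aleph0_mul_aleph0]

section ClosurePoint

variable (H : Ordi → Ordi)

def iterChain : Ordi → Ordi :=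
  WellFoundedLT.fix fun i rec => ⨆ j : Iio i, max (H (rec j j.2)) (rec j j.2)

lemma iterChain_eq (i : Ordi) :
    iterChain H i = ⨆ j : Iio i, max (H (iterChain H j)) (iterChain H j) :=
  WellFoundedLT.fix_eq _ i

lemma max_le_iterChain {j i : Ordi} (h : j < i) :
    max (H (iterChain H j)) (iterChain H j) ≤ iterChain H i := by
  rw [iterChain_eq H i]
  exact le_ciSup (f := fun j : Iio i => max (H (iterChain H j)) (iterChain H j))
    Ordinal.bddAbove_of_small ⟨j, h⟩

lemma iterChain_mono : Monotone (iterChain H) := fun _ _ h =>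
  h.eq_or_lt.elim (fun h => h ▸ le_rfl) fun h => (le_max_right _ _).trans (max_le_iterChain H h)

lemma iterChain_lt_w2 (hH : ∀ δ < w2, H δ < w2) {i : Ordi} (hi : i < w1) : iterChain H i < w2 := by
  induction i using WellFoundedLT.induction with
  | _ i ih =>
    rw [iterChain_eq]
    refine iSup_lt_w2 (mk_Iio_lt_aleph_two (hi.trans w1_lt_w2)) fun j => ?_
    have hj := ih j j.2 (j.2.trans hi)
    exact max_lt (hH _ hj) hj

/-- `δ'` is the supremum of `iterChain H` along `ω₁`, a closure point of `H` of cofinality `ω₁`. -/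
theorem exists_closurePoint (hH : ∀ δ < w2, H δ < w2) :
    ∃ δ' < w2, ∀ s ⊆ Iio δ', s.Countable → ∃ δ, s ⊆ Iio δ ∧ H δ ≤ δ' := by
  have hbdd : BddAbove (range fun i : Iio w1 => iterChain H i) := Ordinal.bddAbove_of_small
  refine ⟨⨆ i : Iio w1, iterChain H i,
    iSup_lt_w2 (mk_Iio_lt_aleph_two w1_lt_w2) fun i => iterChain_lt_w2 H hH i.2, ?_⟩
  intro s hs hsc
  have : Nonempty (Iio w1) := ⟨⟨0, w1_pos⟩⟩
  have : ∀ y : s, ∃ i : Iio w1, y.1 < iterChain H i := fun y =>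
    exists_lt_of_lt_ciSup (hs y.2)
  choose idx hidx using this
  have : Countable s := hsc.to_subtype
  have hsup : ⨆ y : s, (idx y).1 < w1 :=
    (Ordinal.iSup_lt_omega_one fun y => (idx y).2.trans_eq w1_eq_omega_one).trans_eq
      w1_eq_omega_one.symm
  set i := ⨆ y : s, (idx y).1
  refine ⟨iterChain H i, fun y hy => ?_, ?_⟩
  · refine (hidx ⟨y, hy⟩).trans_le (iterChain_mono H ?_)
    exact le_ciSup (f := fun y : s => (idx y).1) ⟨w1, by rintro _ ⟨z, rfl⟩; exact (idx z).2.le⟩ _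
  · calc H (iterChain H i) ≤ iterChain H (i + 1) :=
          (le_max_left _ _).trans (max_le_iterChain H (Order.lt_add_one_iff.2 le_rfl))
      _ ≤ _ := le_ciSup hbdd (⟨i + 1, add_one_lt_w1 hsup⟩ : Iio w1)

end ClosurePoint

def boundedBelow (x : Ordi → Set Ordi) (δ : Ordi) : Set Ordi :=
  {ξ | ξ < w2 ∧ x ξ ∩ Iio ξ ⊆ Iio δ}

/-- A weak Fodor lemma on `ω₂`. If every `boundedBelow x δ` were small, a closure point of
`δ ↦ sup (boundedBelow x δ)` of cofinality `ω₁` would lie in one of these sets while bounding it. -/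
theorem exists_aleph_two_le_mk_boundedBelow (x : Ordi → Set Ordi)
    (hx : ∀ ξ < w2, (x ξ).Countable) : ∃ δ < w2, ℵ_ 2 ≤ #(boundedBelow x δ) := by
  by_contra! hsmall
  let H : Ordi → Ordi := fun δ => ⨆ ξ : boundedBelow x δ, ξ.1 + 1
  have hH : ∀ δ < w2, H δ < w2 := fun δ hδ =>
    iSup_lt_w2 (hsmall δ hδ) fun ξ => add_one_lt_w2 ξ.2.1
  obtain ⟨δ', hδ', hclosed⟩ := exists_closurePoint H hH
  obtain ⟨δ, hδ, hHδ⟩ := hclosed (x δ' ∩ Iio δ') inter_subset_right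
    ((hx δ' hδ').mono inter_subset_left)
  have hbdd : BddAbove (range fun ξ : boundedBelow x δ => ξ.1 + 1) :=
    ⟨w2, by rintro _ ⟨ξ, rfl⟩; exact Order.add_one_le_of_lt ξ.2.1⟩
  have : δ' + 1 ≤ H δ := le_ciSup hbdd (⟨δ', hδ', hδ⟩ : boundedBelow x δ)
  exact (Order.lt_add_one_iff.2 le_rfl).not_ge (this.trans hHδ)

namespace CCond

def graphBelow (p : CCond) (δ : Ordi) : Set ((Ordi × Ordi) × Ordi) :=
  {w | w.1 ∈ p.dom ∧ p.val w.1 = w.2 ∧ w.1.1 < δ}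

lemma graphBelow_countable (p : CCond) (δ : Ordi) : (p.graphBelow δ).Countable := by
  refine (p.dom_countable.image fun z => (z, p.val z)).mono ?_
  rintro w ⟨hz, hw, -⟩
  exact ⟨w.1, hz, Prod.ext rfl hw⟩

lemma graphBelow_subset (p : CCond) (δ : Ordi) :
    p.graphBelow δ ⊆ (Iio δ ×ˢ Iio δ) ×ˢ Iio w1 := by
  rintro w ⟨hz, hw, hδ⟩
  exact ⟨⟨hδ, (p.dom_subset _ hz).2.2.trans hδ⟩, hw ▸ p.mapsTo _ hz⟩

end CCond

lemma mk_Iio_prod_Iio_prod_Iio_w1_le_aleph_one {δ : Ordi} (hδ : δ < w2) :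
    #↥((Iio δ ×ˢ Iio δ) ×ˢ Iio w1) ≤ ℵ₁ := by
  rw [mk_setProd, mk_setProd]
  calc #(Iio δ) * #(Iio δ) * #(Iio w1) ≤ ℵ₁ * ℵ₁ * ℵ₁ := by
        gcongr
        exacts [mk_Iio_le_aleph_one hδ, mk_Iio_le_aleph_one hδ, mk_Iio_le_aleph_one w1_lt_w2]
    _ = ℵ₁ := by rw [mul_eq_self (aleph0_le_aleph 1), mul_eq_self (aleph0_le_aleph 1)]

theorem CCompatible.of_agree_of_injOn {P Q : CCond}
    (hagree : ∀ z ∈ P.dom, z ∈ Q.dom → P.val z = Q.val z)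
    (hinj : ∀ β γ γ', (β, γ) ∈ P.dom → (β, γ') ∈ Q.dom →
      P.val (β, γ) = Q.val (β, γ') → γ = γ') :
    CCompatible P Q := by
  classical
  refine ⟨⟨P.dom ∪ Q.dom, fun z => if z ∈ P.dom then P.val z else Q.val z,
    P.dom_countable.union Q.dom_countable, ?_, ?_, ?_⟩, ⟨subset_union_left, ?_⟩,
    ⟨subset_union_right, ?_⟩⟩
  · rintro z (hz | hz)
    exacts [P.dom_subset z hz, Q.dom_subset z hz]
  · intro z hz
    split_ifs with hP
    exacts [P.mapsTo z hP, Q.mapsTo z (hz.resolve_left hP)]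
  · intro β γ γ' hγ hγ' hval
    split_ifs at hval with hP hP' hP'
    · exact P.injOn β γ γ' hP hP' hval
    · exact hinj β γ γ' hP (hγ'.resolve_left hP') hval
    · exact (hinj β γ' γ hP' (hγ.resolve_left hP) hval.symm).symm
    · exact Q.injOn β γ γ' (hγ.resolve_left hP) (hγ'.resolve_left hP') hval
  · intro z hz
    simp only [if_pos hz]
  · intro z hz
    dsimp only
    split_ifs with hP
    exacts [hagree z hP hz, rfl]

theorem CCompatible.of_graphBelow_eq {P Q : CCond} {δ : Ordi}
    (hfst : Prod.fst '' P.dom ∩ Prod.fst '' Q.dom ⊆ Iio δ)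
    (hgraph : P.graphBelow δ = Q.graphBelow δ) : CCompatible P Q := by
  have hQ : ∀ z ∈ P.dom, z.1 ∈ Prod.fst '' Q.dom → z ∈ Q.dom ∧ Q.val z = P.val z := by
    intro z hz hzQ
    have hw : (z, P.val z) ∈ Q.graphBelow δ :=
      hgraph ▸ ⟨hz, rfl, hfst ⟨mem_image_of_mem _ hz, hzQ⟩⟩
    exact ⟨hw.1, hw.2.1⟩
  refine CCompatible.of_agree_of_injOn (fun z hzP hzQ => ?_) fun β γ γ' hP hQ' hval => ?_
  · exact (hQ z hzP (mem_image_of_mem _ hzQ)).2.symm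
  · obtain ⟨hdom, hv⟩ := hQ (β, γ) hP ⟨_, hQ', rfl⟩
    exact Q.injOn β γ γ' hdom hQ' (hv.trans hval)

theorem exists_compatible_pair (hCH : (2 : Cardinal.{1}) ^ ℵ₀ = ℵ₁) (p : Ordi → CCond) :
    ∃ ξ < w2, ∃ η < w2, ξ ≠ η ∧ CCompatible (p ξ) (p η) := by
  let x : Ordi → Set Ordi := fun ξ => Prod.fst '' (p ξ).dom
  have hx : ∀ ξ, (x ξ).Countable := fun ξ => (p ξ).dom_countable.image _
  obtain ⟨δ, hδ, hG⟩ := exists_aleph_two_le_mk_boundedBelow x fun ξ _ => hx ξ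
  let T := {t : Set ((Ordi × Ordi) × Ordi) // t ⊆ (Iio δ ×ˢ Iio δ) ×ˢ Iio w1 ∧ t.Countable}
  have hT : #T < (ℵ_ 2).ord.cof := by
    rw [isRegular_aleph_two.cof_ord]
    exact (mk_countable_subsets_le_aleph_one hCH
      (mk_Iio_prod_Iio_prod_Iio_w1_le_aleph_one hδ)).trans_lt (aleph_lt_aleph.2 one_lt_two)
  obtain ⟨t, J, hJG, hJ, hJt⟩ := infinite_pigeonhole_set
    (fun ξ : boundedBelow x δ => (⟨(p ξ).graphBelow δ, (p ξ).graphBelow_subset δ,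
      (p ξ).graphBelow_countable δ⟩ : T)) (ℵ_ 2) hG (aleph0_le_aleph 2) hT
  have hxw2 : ∀ ξ, x ξ ⊆ Iio w2 := by
    rintro ξ _ ⟨z, hz, rfl⟩
    exact ((p ξ).dom_subset z hz).2.1
  obtain ⟨⟨ξ, hξ⟩⟩ := mk_ne_zero_iff.1 ((aleph_pos 2).trans_le hJ).ne'
  obtain ⟨η, hη, hξη⟩ := exists_forall_lt_of_aleph_two_le_mk hJ (s := insert ξ (x ξ))
    (((hx ξ).insert ξ).le_aleph0.trans_lt (aleph0_lt_aleph.2 two_pos))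
    (insert_subset (hJG hξ).1 (hxw2 ξ))
  refine ⟨ξ, (hJG hξ).1, η, (hJG hη).1, (hξη ξ (mem_insert ξ _)).ne, ?_⟩
  refine CCompatible.of_graphBelow_eq (δ := δ)
    (fun β hβ => (hJG hη).2 ⟨hβ.2, hξη β (Or.inr hβ.1)⟩) ?_
  exact congrArg Subtype.val ((hJt hξ).trans (hJt hη).symm)

/-- Assuming CH, the poset `ℂ` is `ω₂`-c.c.: every set of pairwise
incompatible conditions has cardinality at most `ω₁`. -/
theorem CCond_omega2_cc (hCH : (2 : Cardinal.{1}) ^ Cardinal.aleph0 = Cardinal.aleph 1)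
    (A : Set CCond)
    (hA : ∀ p ∈ A, ∀ q ∈ A, p ≠ q → ¬ CCompatible p q) :
    Cardinal.mk ↥A ≤ Cardinal.aleph 1 := by
  by_contra! hlarge
  obtain ⟨F⟩ : Nonempty (Iio w2 ↪ A) := by
    rw [← le_def, mk_Iio_w2, ← one_add_one_eq_two, ← succ_aleph]
    exact Order.succ_le_of_lt hlarge
  let p : Ordi → CCond := fun ξ => if h : ξ < w2 then F ⟨ξ, h⟩ else F ⟨0, w2_pos⟩
  obtain ⟨ξ, hξ, η, hη, hne, hcompat⟩ := exists_compatible_pair hCH p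
  simp only [p, dif_pos hξ, dif_pos hη] at hcompat
  refine hA _ (F _).2 _ (F _).2 (fun h => hne ?_) hcompat
  simpa using congrArg Subtype.val (F.injective (Subtype.ext h))

end
end
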